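/- arXiv:1708.01152 — 2 statements merged into one kernel-verified Lean document; each statement's English description precedes it below -/
import Mathlib

section
/- Let d ≥ 1, M ≥ 0, N₀ ∈ ℕ ∪ {0}, let x ∈ ℝ^d with ‖x‖ > N₀, let A = (a_ij)_{1≤i,j≤d} be a symmetric real d×d matrix and g ∈ ℝ^d, and suppose that ( ‖x‖/(‖x‖−N₀) − 1/2 − 3(‖x‖−N₀)²‖x‖ / (2((‖x‖−N₀)³ + 1)) )·⟨Ax, x⟩/‖x‖² + (1/2)·trace(A) + ⟨g, x⟩ ≤ M·( (‖x‖−N₀) + 1/(‖x‖−N₀)² )·‖x‖·( ln((‖x‖−N₀)³ + 1) + 1 ). Define f(y) := ln((‖y‖−N₀)³ + 1) + 1 for ‖y‖ > N₀. Then f is twice continuously differentiable on {y ∈ ℝ^d : ‖y‖ > N₀} and at the point x one has (1/2)·Σ_{i,j=1}^d a_ij ∂_i∂_j f(x) + ⟨g, ∇f(x)⟩ ≤ 3M·f(x). -/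
/-!
The function is radial, `f y = φ ‖y‖` with `φ t = log ((t - N₀)³ + 1) + 1`. For a radial function
`∂ⱼ f y = ψ ‖y‖ * yⱼ` with `ψ t = φ' t / t`, hence `∂ᵢ∂ⱼ f x = ψ' r / r * xᵢ xⱼ + ψ r * δᵢⱼ` (`r = ‖x‖`),
and the generator at `x` equals
`ψ r * (r ψ' r / (2 ψ r) * ⟨Ax, x⟩ / r² + trace A / 2 + ⟨g, x⟩)`.
With `s = r - N₀`, the logarithmic derivative gives `r ψ' r / (2 ψ r) = r / s - 1/2 - 3 s² r / (2 (s³ + 1))`,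
the coefficient in the growth condition, and `ψ r * (s + 1 / s²) * r = 3`.
-/

/-- The i-th partial derivative `∂ᵢ u (x)`. -/
noncomputable def pd {d : ℕ} (u : EuclideanSpace ℝ (Fin d) → ℝ) (i : Fin d)
    (x : EuclideanSpace ℝ (Fin d)) : ℝ :=
  fderiv ℝ u x (EuclideanSpace.single i 1)

/-- The second partial derivative `∂ᵢ∂ⱼ u (x)`. -/
noncomputable def pd2 {d : ℕ} (u : EuclideanSpace ℝ (Fin d) → ℝ) (i j : Fin d)
    (x : EuclideanSpace ℝ (Fin d)) : ℝ :=
  pd (fun y => pd u j y) i x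

open Real Filter Topology

section Radial

variable {E : Type*} [NormedAddCommGroup E] [InnerProductSpace ℝ E]

theorem hasFDerivAt_norm {x : E} (hx : x ≠ 0) :
    HasFDerivAt (‖·‖) (‖x‖⁻¹ • innerSL ℝ x) x := by
  have hsqrt : HasDerivAt sqrt (1 / (2 * ‖x‖)) (‖x‖ ^ 2) := by
    simpa [sqrt_sq (norm_nonneg x)] using hasDerivAt_sqrt (pow_ne_zero 2 (norm_ne_zero_iff.mpr hx))
  have h := hsqrt.comp_hasFDerivAt x (hasStrictFDerivAt_norm_sq x).hasFDerivAt
  rw [show (sqrt ∘ fun y : E => ‖y‖ ^ 2) = (‖·‖) from funext fun y => sqrt_sq (norm_nonneg y)] at h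
  refine h.congr_fderiv ?_
  ext v
  simp only [smul_apply, coe_innerSL_apply, nsmul_eq_mul, Nat.cast_ofNat, smul_eq_mul]
  field_simp

theorem HasDerivAt.hasFDerivAt_comp_norm {φ : ℝ → ℝ} {φ' : ℝ} {x : E}
    (hφ : HasDerivAt φ φ' ‖x‖) (hx : x ≠ 0) :
    HasFDerivAt (fun y => φ ‖y‖) ((φ' / ‖x‖) • innerSL ℝ x) x :=
  (hφ.comp_hasFDerivAt x (hasFDerivAt_norm hx)).congr_fderiv (by rw [smul_smul, div_eq_mul_inv])

end Radial

section Euclidean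

variable {d : ℕ} {φ : ℝ → ℝ} {x : EuclideanSpace ℝ (Fin d)}

theorem pd_norm_comp {φ' : ℝ} (hφ : HasDerivAt φ φ' ‖x‖) (hx : x ≠ 0) (j : Fin d) :
    pd (fun y => φ ‖y‖) j x = φ' / ‖x‖ * x j := by
  simp [pd, (hφ.hasFDerivAt_comp_norm hx).fderiv, EuclideanSpace.inner_single_right]

theorem pd2_norm_comp {φ' : ℝ → ℝ} {ψ' : ℝ} (hφ : ∀ᶠ t in 𝓝 ‖x‖, HasDerivAt φ (φ' t) t)
    (hψ : HasDerivAt (fun t => φ' t / t) ψ' ‖x‖) (hx : x ≠ 0) (i j : Fin d) :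
    pd2 (fun y => φ ‖y‖) i j x = ψ' / ‖x‖ * x i * x j + φ' ‖x‖ / ‖x‖ * if j = i then 1 else 0 := by
  have hpd : (fun y => pd (fun y => φ ‖y‖) j y) =ᶠ[𝓝 x] fun y => φ' ‖y‖ / ‖y‖ * y j := by
    filter_upwards [continuous_norm.continuousAt.eventually hφ, eventually_ne_nhds hx]
      with y hy hy0 using pd_norm_comp hy hy0 j
  have H : HasFDerivAt (fun y : EuclideanSpace ℝ (Fin d) => φ' ‖y‖ / ‖y‖ * y j) _ x :=
    (hψ.hasFDerivAt_comp_norm hx).mul (EuclideanSpace.proj j : _ →L[ℝ] ℝ).hasFDerivAt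
  rw [pd2, pd, hpd.fderiv_eq, H.fderiv]
  simp only [add_apply, smul_apply, PiLp.proj_apply, PiLp.single_apply, smul_eq_mul, mul_ite,
    mul_one, mul_zero, coe_innerSL_apply, EuclideanSpace.inner_single_right, ringHom_apply, one_mul]
  ring

noncomputable def diffusionGenerator (A : Matrix (Fin d) (Fin d) ℝ) (g : EuclideanSpace ℝ (Fin d))
    (u : EuclideanSpace ℝ (Fin d) → ℝ) (x : EuclideanSpace ℝ (Fin d)) : ℝ :=
  (1 / 2) * ∑ i, ∑ j, A i j * pd2 u i j x + ∑ i, g i * pd u i x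

theorem diffusionGenerator_norm_comp (A : Matrix (Fin d) (Fin d) ℝ) (g : EuclideanSpace ℝ (Fin d))
    {φ' : ℝ → ℝ} {ψ' : ℝ} (hφ : ∀ᶠ t in 𝓝 ‖x‖, HasDerivAt φ (φ' t) t)
    (hψ : HasDerivAt (fun t => φ' t / t) ψ' ‖x‖) (hx : x ≠ 0) :
    diffusionGenerator A g (fun y => φ ‖y‖) x
      = ψ' / (2 * ‖x‖) * ∑ i, (∑ j, A i j * x j) * x i
        + φ' ‖x‖ / ‖x‖ * ((1 / 2) * A.trace + ∑ i, g i * x i) := by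
  have hsecond : ∑ i, ∑ j, A i j * pd2 (fun y => φ ‖y‖) i j x
      = ψ' / ‖x‖ * ∑ i, (∑ j, A i j * x j) * x i + φ' ‖x‖ / ‖x‖ * A.trace := by
    simp only [pd2_norm_comp hφ hψ hx, mul_add, Finset.sum_add_distrib, mul_ite, mul_one, mul_zero,
      Finset.sum_ite_eq', Finset.mem_univ, if_true, Matrix.trace, Matrix.diag, Finset.mul_sum,
      Finset.sum_mul]
    congr 1
    · exact Finset.sum_congr rfl fun i _ => Finset.sum_congr rfl fun j _ => by ring
    · exact Finset.sum_congr rfl fun i _ => by ring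
  have hfirst : ∑ i, g i * pd (fun y => φ ‖y‖) i x = φ' ‖x‖ / ‖x‖ * ∑ i, g i * x i := by
    simp only [pd_norm_comp hφ.self_of_nhds hx, Finset.mul_sum]
    exact Finset.sum_congr rfl fun i _ => by ring
  rw [diffusionGenerator, hsecond, hfirst]
  ring

end Euclidean

section LogCubic

variable {c r : ℝ}

theorem hasDerivAt_log_cubic (hr : c < r) :
    HasDerivAt (fun t => log ((t - c) ^ 3 + 1) + 1) (3 * (r - c) ^ 2 / ((r - c) ^ 3 + 1)) r := by
  have hpos : 0 < (r - c) ^ 3 + 1 := add_pos (pow_pos (sub_pos.2 hr) 3) one_pos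
  have hcubic : HasDerivAt (fun t => (t - c) ^ 3 + 1) (3 * (r - c) ^ 2) r := by
    simpa using (((hasDerivAt_id r).sub_const c).pow 3).add_const 1
  exact (hcubic.log hpos.ne').add_const 1

theorem hasDerivAt_log_cubic_deriv_div (hr : c < r) (hr0 : 0 < r) :
    HasDerivAt (fun t => 3 * (t - c) ^ 2 / ((t - c) ^ 3 + 1) / t)
      (3 * (r - c) ^ 2 / ((r - c) ^ 3 + 1) / r
        * (2 / (r - c) - 3 * (r - c) ^ 2 / ((r - c) ^ 3 + 1) - 1 / r)) r := by
  have hs : 0 < r - c := sub_pos.2 hr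
  have hpos : 0 < (r - c) ^ 3 + 1 := add_pos (pow_pos hs 3) one_pos
  have hnum : HasDerivAt (fun t => 3 * (t - c) ^ 2) (3 * (2 * (r - c))) r := by
    simpa using (((hasDerivAt_id r).sub_const c).pow 2).const_mul 3
  have hcubic : HasDerivAt (fun t => (t - c) ^ 3 + 1) (3 * (r - c) ^ 2) r := by
    simpa using (((hasDerivAt_id r).sub_const c).pow 3).add_const 1
  have hquot : HasDerivAt (fun t => 3 * (t - c) ^ 2 / ((t - c) ^ 3 + 1) / t) _ r :=
    (hnum.fun_div hcubic hpos.ne').fun_div (hasDerivAt_id' r) hr0.ne'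
  refine hquot.congr_deriv ?_
  field_simp

theorem contDiffOn_log_cubic_norm {E : Type*} [NormedAddCommGroup E] [InnerProductSpace ℝ E]
    (hc : 0 ≤ c) (n : WithTop ℕ∞) :
    ContDiffOn ℝ n (fun y : E => log ((‖y‖ - c) ^ 3 + 1) + 1) {y | c < ‖y‖} := by
  intro y (hy : c < ‖y‖)
  have hpos : 0 < (‖y‖ - c) ^ 3 + 1 := add_pos (pow_pos (sub_pos.2 hy) 3) one_pos
  have hlog : ContDiffAt ℝ n (fun t => log ((t - c) ^ 3 + 1) + 1) ‖y‖ :=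
    (((contDiffAt_id.sub contDiffAt_const).pow 3).add contDiffAt_const |>.log hpos.ne').add
      contDiffAt_const
  exact (hlog.comp y (contDiffAt_norm ℝ (norm_pos_iff.1 (hc.trans_lt hy)))).contDiffWithinAt

end LogCubic

theorem stmt_6_general (d : ℕ) (M : ℝ) (N₀ : ℕ)
    (x : EuclideanSpace ℝ (Fin d)) (hx : (N₀ : ℝ) < ‖x‖)
    (A : Matrix (Fin d) (Fin d) ℝ)
    (g : EuclideanSpace ℝ (Fin d))
    (hgrowth :
      (‖x‖ / (‖x‖ - N₀) - 1 / 2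
          - 3 * (‖x‖ - N₀) ^ 2 * ‖x‖ / (2 * ((‖x‖ - N₀) ^ 3 + 1)))
            * ((∑ i, (∑ j, A i j * x j) * x i) / ‖x‖ ^ 2)
        + (1 / 2) * Matrix.trace A + (∑ i, g i * x i)
        ≤ M * ((‖x‖ - N₀) + 1 / (‖x‖ - N₀) ^ 2) * ‖x‖
            * (Real.log ((‖x‖ - N₀) ^ 3 + 1) + 1)) :
    ContDiffOn ℝ 2
        (fun y : EuclideanSpace ℝ (Fin d) => Real.log ((‖y‖ - N₀) ^ 3 + 1) + 1)
        {y : EuclideanSpace ℝ (Fin d) | (N₀ : ℝ) < ‖y‖} ∧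
    (1 / 2) * (∑ i, ∑ j, A i j *
          pd2 (fun y : EuclideanSpace ℝ (Fin d) => Real.log ((‖y‖ - N₀) ^ 3 + 1) + 1) i j x)
      + (∑ i, g i *
          pd (fun y : EuclideanSpace ℝ (Fin d) => Real.log ((‖y‖ - N₀) ^ 3 + 1) + 1) i x)
      ≤ 3 * M * (Real.log ((‖x‖ - N₀) ^ 3 + 1) + 1) := by
  have hc : (0 : ℝ) ≤ N₀ := N₀.cast_nonneg
  have hr : 0 < ‖x‖ := hc.trans_lt hx
  have hs : 0 < ‖x‖ - N₀ := sub_pos.2 hx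
  have hpos : 0 < (‖x‖ - N₀) ^ 3 + 1 := add_pos (pow_pos hs 3) one_pos
  refine ⟨contDiffOn_log_cubic_norm hc 2, ?_⟩
  change diffusionGenerator A g _ x ≤ _
  rw [diffusionGenerator_norm_comp A g ((lt_mem_nhds hx).mono fun t ht => hasDerivAt_log_cubic ht)
    (hasDerivAt_log_cubic_deriv_div hx hr) (norm_pos_iff.1 hr)]
  set r := ‖x‖
  set s := r - N₀
  calc _ = 3 * s ^ 2 / (s ^ 3 + 1) / r * ((r / s - 1 / 2 - 3 * s ^ 2 * r / (2 * (s ^ 3 + 1)))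
          * ((∑ i, (∑ j, A i j * x j) * x i) / r ^ 2) + 1 / 2 * A.trace + ∑ i, g i * x i) := by
        field_simp
        ring
    _ ≤ 3 * s ^ 2 / (s ^ 3 + 1) / r * (M * (s + 1 / s ^ 2) * r * (log (s ^ 3 + 1) + 1)) := by
        gcongr
    _ = 3 * M * (log (s ^ 3 + 1) + 1) := by
        field_simp

/-- the pointwise computation behind the second non-explosion criterion
(growth condition only outside the ball of radius `N₀`): with
`f(y) = ln((‖y‖−N₀)³+1)+1`, `f` is C² on `{‖y‖ > N₀}` and
`(1/2)Σᵢⱼ aᵢⱼ ∂ᵢ∂ⱼ f(x) + ⟨g,∇f(x)⟩ ≤ 3M f(x)`. -/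
theorem stmt_6 (d : ℕ) (hd : 1 ≤ d) (M : ℝ) (hM : 0 ≤ M) (N₀ : ℕ)
    (x : EuclideanSpace ℝ (Fin d)) (hx : (N₀ : ℝ) < ‖x‖)
    (A : Matrix (Fin d) (Fin d) ℝ) (hA : A.IsSymm)
    (g : EuclideanSpace ℝ (Fin d))
    (hgrowth :
      (‖x‖ / (‖x‖ - N₀) - 1 / 2
          - 3 * (‖x‖ - N₀) ^ 2 * ‖x‖ / (2 * ((‖x‖ - N₀) ^ 3 + 1)))
            * ((∑ i, (∑ j, A i j * x j) * x i) / ‖x‖ ^ 2)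
        + (1 / 2) * Matrix.trace A + (∑ i, g i * x i)
        ≤ M * ((‖x‖ - N₀) + 1 / (‖x‖ - N₀) ^ 2) * ‖x‖
            * (Real.log ((‖x‖ - N₀) ^ 3 + 1) + 1)) :
    ContDiffOn ℝ 2
        (fun y : EuclideanSpace ℝ (Fin d) => Real.log ((‖y‖ - N₀) ^ 3 + 1) + 1)
        {y : EuclideanSpace ℝ (Fin d) | (N₀ : ℝ) < ‖y‖} ∧
    (1 / 2) * (∑ i, ∑ j, A i j *
          pd2 (fun y : EuclideanSpace ℝ (Fin d) => Real.log ((‖y‖ - N₀) ^ 3 + 1) + 1) i j x)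
      + (∑ i, g i *
          pd (fun y : EuclideanSpace ℝ (Fin d) => Real.log ((‖y‖ - N₀) ^ 3 + 1) + 1) i x)
      ≤ 3 * M * (Real.log ((‖x‖ - N₀) ^ 3 + 1) + 1) :=
  stmt_6_general d M N₀ x hx A g hgrowth
end

section
/- Let (Ω, 𝓕, (𝓕_t)_{t≥0}, P) be a filtered probability space, let x ∈ ℝ^d, let M ≥ 0, and let X : [0,∞) × Ω → ℝ^d be an (𝓕_t)-adapted process with continuous sample paths and X_0 = x almost surely. Define f : ℝ^d → ℝ by f(y) := ln(1 + ‖y‖²) + 1, and for n ∈ ℕ let τ_n := inf{ t ≥ 0 : ‖X_t‖ ≥ n } (with inf ∅ := ∞). Assume that for every n ∈ ℕ with n > ‖x‖ the stopped, exponentially discounted process ( e^{−M·(t ∧ τ_n)}·f(X_{t ∧ τ_n}) )_{t ≥ 0} is an (𝓕_t)-supermartingale. Then for every t ≥ 0 and every n ∈ ℕ with n > ‖x‖ one has P(τ_n ≤ t) ≤ e^{Mt}·( ln(1 + ‖x‖²) + 1 ) / ( ln(1 + n²) + 1 ); in particular, almost surely lim_{n→∞} τ_n = ∞, i.e. P(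 sup_n τ_n = ∞ ) = 1. -/
/-!
Let `f y = log (1 + ‖y‖²) + 1` and let `Y` be the discounted stopped process
`e^{-M (t ∧ τₙ)} f(X_{t ∧ τₙ})`. By path continuity the exit time is attained, so on `{τₙ ≤ t}`
we have `‖X_{τₙ}‖ ≥ n` and hence `Y_t ≥ e^{-Mt} f(n)`. Markov's inequality and the decreasing
expectations of the supermartingale `Y` give `e^{-Mt} f(n) P(τₙ ≤ t) ≤ E Y_t ≤ E Y_0 = f(x)`.
Since `f(n) → ∞`, `P(τₙ ≤ t) → 0` for every `t`, so `sup τₙ = ∞` almost surely.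
-/

open MeasureTheory Filter
open scoped NNReal ENNReal Topology

theorem ENNReal.exists_mem_sInf_image_coe_eq {A : Set ℝ≥0} (hA : IsClosed A)
    (h : sInf ((↑) '' A : Set ℝ≥0∞) ≠ ∞) : ∃ s ∈ A, sInf ((↑) '' A : Set ℝ≥0∞) = s := by
  have hne : A.Nonempty := by
    by_contra hempty
    simp [Set.not_nonempty_iff_eq_empty.mp hempty] at h
  exact ⟨sInf A, hA.csInf_mem hne (OrderBot.bddBelow A), by rw [sInf_image, ENNReal.coe_sInf hne]⟩

theorem Continuous.exists_hitting_eq_of_le {E : Type*} [SeminormedAddGroup E] {γ : ℝ≥0 → E}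
    (hγ : Continuous γ) (r : ℝ) {t : ℝ≥0}
    (h : sInf {s : ℝ≥0∞ | ∃ u : ℝ≥0, s = u ∧ r ≤ ‖γ u‖} ≤ t) :
    ∃ s ≤ t, r ≤ ‖γ s‖ ∧ sInf {s : ℝ≥0∞ | ∃ u : ℝ≥0, s = u ∧ r ≤ ‖γ u‖} = s := by
  have himage : {s : ℝ≥0∞ | ∃ u : ℝ≥0, s = u ∧ r ≤ ‖γ u‖} = (↑) '' {u | r ≤ ‖γ u‖} := by
    ext s
    simp only [Set.mem_ofPred_eq, Set.mem_image]
    exact exists_congr fun u => by rw [eq_comm, and_comm]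
  rw [himage] at h ⊢
  obtain ⟨s, hs, hinf⟩ := ENNReal.exists_mem_sInf_image_coe_eq
    (isClosed_le continuous_const hγ.norm) (ne_top_of_le_ne_top ENNReal.coe_ne_top h)
  exact ⟨s, by rwa [hinf, ENNReal.coe_le_coe] at h, hs, hinf⟩

theorem MeasureTheory.Supermartingale.measure_le_integral_div {ι Ω : Type*} [Preorder ι]
    {m0 : MeasurableSpace Ω} {μ : Measure Ω} [IsFiniteMeasure μ] {ℱ : Filtration ι m0}
    {Y : ι → Ω → ℝ} (hY : Supermartingale Y ℱ μ) {i j : ι} (hij : i ≤ j)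
    (hnonneg : 0 ≤ᵐ[μ] Y j) {c : ℝ} (hc : 0 < c) {A : Set Ω} (hA : ∀ ω ∈ A, c ≤ Y j ω) :
    μ A ≤ ENNReal.ofReal ((∫ ω, Y i ω ∂μ) / c) := by
  have hdecr : ∫ ω, Y j ω ∂μ ≤ ∫ ω, Y i ω ∂μ := by
    simpa only [setIntegral_univ] using hY.setIntegral_le hij MeasurableSet.univ
  have hmarkov := mul_meas_ge_le_integral_of_nonneg hnonneg (hY.integrable j) c
  calc μ A ≤ μ {ω | c ≤ Y j ω} := measure_mono hA
    _ = ENNReal.ofReal (μ.real {ω | c ≤ Y j ω}) := (ofReal_measureReal (measure_ne_top _ _)).symm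
    _ ≤ ENNReal.ofReal ((∫ ω, Y i ω ∂μ) / c) :=
      ENNReal.ofReal_le_ofReal ((le_div_iff₀ hc).mpr (by linarith))

theorem MeasureTheory.measure_iSup_eq_top_eq_one {Ω : Type*} [MeasurableSpace Ω]
    {P : Measure Ω} [IsProbabilityMeasure P] {τ : ℕ → Ω → ℝ≥0∞}
    (h : ∀ t : ℝ≥0, Tendsto (fun n => P {ω | τ n ω ≤ t}) atTop (𝓝 0)) :
    P {ω | ⨆ n, τ n ω = ∞} = 1 := by
  have hcover : {ω | ⨆ n, τ n ω = ∞}ᶜ ⊆ ⋃ k : ℕ, ⋂ n, {ω | τ n ω ≤ (k : ℝ≥0)} := by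
    intro ω hω
    obtain ⟨k, hk⟩ := ENNReal.exists_nat_gt hω
    exact Set.mem_iUnion.mpr ⟨k, Set.mem_iInter.mpr fun n =>
      (le_iSup (τ · ω) n).trans (mod_cast hk.le)⟩
  have hnull : P {ω | ⨆ n, τ n ω = ∞}ᶜ = 0 := by
    refine measure_mono_null hcover (measure_iUnion_null fun k => le_antisymm ?_ zero_le)
    exact ge_of_tendsto' (h k) fun n =>
      measure_mono (Set.iInter_subset (fun n => {ω | τ n ω ≤ (k : ℝ≥0)}) n)
  refine le_antisymm prob_le_one ?_
  simpa [hnull] using measure_univ_le_add_compl (μ := P) {ω | ⨆ n, τ n ω = ∞}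

theorem Real.log_one_add_sq_add_one_pos (r : ℝ) : 0 < Real.log (1 + r ^ 2) + 1 := by
  have := Real.log_nonneg (by nlinarith [sq_nonneg r] : (1 : ℝ) ≤ 1 + r ^ 2)
  linarith

theorem Real.tendsto_log_one_add_sq_add_one :
    Tendsto (fun n : ℕ => Real.log (1 + (n : ℝ) ^ 2) + 1) atTop atTop :=
  tendsto_atTop_add_const_right _ _ <| Real.tendsto_log_atTop.comp <|
    tendsto_atTop_add_const_left _ _ <|
      (tendsto_pow_atTop two_ne_zero).comp tendsto_natCast_atTop_atTop

theorem Continuous.exp_mul_log_le_of_hitting_le {E : Type*} [SeminormedAddGroup E]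
    {γ : ℝ≥0 → E} (hγ : Continuous γ) {M : ℝ} (hM : 0 ≤ M) {r : ℝ} (hr : 0 ≤ r)
    {t : ℝ≥0} {τ : ℝ≥0∞} (hτ : τ = sInf {s : ℝ≥0∞ | ∃ u : ℝ≥0, s = u ∧ r ≤ ‖γ u‖})
    (hτt : τ ≤ t) :
    Real.exp (-(M * t)) * (Real.log (1 + r ^ 2) + 1) ≤
      Real.exp (-M * (((t : ℝ≥0∞) ⊓ τ).toNNReal : ℝ)) *
        (Real.log (1 + ‖γ ((t : ℝ≥0∞) ⊓ τ).toNNReal‖ ^ 2) + 1) := by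
  obtain ⟨s, hst, hrs, hτs⟩ := hγ.exists_hitting_eq_of_le r (hτ ▸ hτt)
  have hstop : ((t : ℝ≥0∞) ⊓ τ).toNNReal = s := by
    rw [hτ, hτs, inf_eq_right.mpr (ENNReal.coe_le_coe.mpr hst), ENNReal.toNNReal_coe]
  rw [hstop]
  have hdiscount : Real.exp (-(M * t)) ≤ Real.exp (-M * s) := by
    have : (s : ℝ) ≤ t := hst
    rw [Real.exp_le_exp]
    nlinarith
  have hlog : Real.log (1 + r ^ 2) + 1 ≤ Real.log (1 + ‖γ s‖ ^ 2) + 1 := by gcongr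
  exact mul_le_mul hdiscount hlog (Real.log_one_add_sq_add_one_pos r).le (Real.exp_pos _).le

theorem stmt_7_general (d : ℕ)
    {Ω : Type*} {m0 : MeasurableSpace Ω} (P : Measure Ω) [IsProbabilityMeasure P]
    (ℱ : Filtration ℝ≥0 m0)
    (x : EuclideanSpace ℝ (Fin d)) (M : ℝ) (hM : 0 ≤ M)
    (X : ℝ≥0 → Ω → EuclideanSpace ℝ (Fin d))
    (hcont : ∀ ω, Continuous fun t => X t ω)
    (hX0 : ∀ᵐ ω ∂P, X 0 ω = x)
    (τ : ℕ → Ω → ℝ≥0∞)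
    (hτ : ∀ n ω, τ n ω = sInf {s : ℝ≥0∞ | ∃ t : ℝ≥0, s = (t : ℝ≥0∞) ∧ (n : ℝ) ≤ ‖X t ω‖})
    (hsuper : ∀ n : ℕ, ‖x‖ < n →
      Supermartingale
        (fun (t : ℝ≥0) (ω : Ω) =>
          Real.exp (-M * ((((t : ℝ≥0∞) ⊓ τ n ω).toNNReal : ℝ))) *
            (Real.log (1 + ‖X (((t : ℝ≥0∞) ⊓ τ n ω).toNNReal) ω‖ ^ 2) + 1))
        ℱ P) :
    (∀ (t : ℝ≥0) (n : ℕ), ‖x‖ < n →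
      P {ω | τ n ω ≤ (t : ℝ≥0∞)} ≤
        ENNReal.ofReal
          (Real.exp (M * t) * (Real.log (1 + ‖x‖ ^ 2) + 1) /
            (Real.log (1 + (n : ℝ) ^ 2) + 1))) ∧
    P {ω | (⨆ n : ℕ, τ n ω) = ∞} = 1 := by
  have hbound : ∀ (t : ℝ≥0) (n : ℕ), ‖x‖ < n →
      P {ω | τ n ω ≤ (t : ℝ≥0∞)} ≤
        ENNReal.ofReal
          (Real.exp (M * t) * (Real.log (1 + ‖x‖ ^ 2) + 1) /
            (Real.log (1 + (n : ℝ) ^ 2) + 1)) := by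
    intro t n hn
    have hstart : ∫ ω, Real.exp (-M * (((((0 : ℝ≥0) : ℝ≥0∞) ⊓ τ n ω).toNNReal : ℝ))) *
        (Real.log (1 + ‖X ((((0 : ℝ≥0) : ℝ≥0∞) ⊓ τ n ω).toNNReal) ω‖ ^ 2) + 1) ∂P =
          Real.log (1 + ‖x‖ ^ 2) + 1 := by
      rw [integral_congr_ae (g := fun _ => Real.log (1 + ‖x‖ ^ 2) + 1)
        (hX0.mono fun ω hω => by simp [hω])]
      simp
    have hmarkov := (hsuper n hn).measure_le_integral_div (zero_le : 0 ≤ t) (A := {ω | τ n ω ≤ t})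
      (ae_of_all _ fun ω => mul_nonneg (Real.exp_pos _).le
        (Real.log_one_add_sq_add_one_pos _).le)
      (mul_pos (Real.exp_pos _) (Real.log_one_add_sq_add_one_pos n))
      (fun ω hω => (hcont ω).exp_mul_log_le_of_hitting_le hM n.cast_nonneg (hτ n ω) hω)
    rw [hstart] at hmarkov
    convert hmarkov using 2
    rw [Real.exp_neg]
    field_simp
  refine ⟨hbound, measure_iSup_eq_top_eq_one fun t => ?_⟩
  have hlim : Tendsto (fun n : ℕ => ENNReal.ofReal (Real.exp (M * t) *
      (Real.log (1 + ‖x‖ ^ 2) + 1) / (Real.log (1 + (n : ℝ) ^ 2) + 1))) atTop (𝓝 0) := by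
    simpa using ENNReal.tendsto_ofReal
      (tendsto_const_nhds.div_atTop Real.tendsto_log_one_add_sq_add_one)
  refine tendsto_of_tendsto_of_tendsto_of_le_of_le' tendsto_const_nhds hlim
    (Eventually.of_forall fun _ => zero_le) ?_
  filter_upwards [eventually_gt_atTop ⌈‖x‖⌉₊] with n hn
  exact hbound t n (Nat.lt_of_ceil_lt hn)

/-- supermartingale estimate for the exit times of a continuous adapted
process, and the resulting non-explosion `P(sup_n τ_n = ∞) = 1`. -/
theorem stmt_7 (d : ℕ) (hd : 1 ≤ d)
    {Ω : Type*} {m0 : MeasurableSpace Ω} (P : Measure Ω) [IsProbabilityMeasure P]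
    (ℱ : Filtration ℝ≥0 m0)
    (x : EuclideanSpace ℝ (Fin d)) (M : ℝ) (hM : 0 ≤ M)
    (X : ℝ≥0 → Ω → EuclideanSpace ℝ (Fin d))
    (hadapt : Adapted ℱ X)
    (hcont : ∀ ω, Continuous fun t => X t ω)
    (hX0 : ∀ᵐ ω ∂P, X 0 ω = x)
    (τ : ℕ → Ω → ℝ≥0∞)
    (hτ : ∀ n ω, τ n ω = sInf {s : ℝ≥0∞ | ∃ t : ℝ≥0, s = (t : ℝ≥0∞) ∧ (n : ℝ) ≤ ‖X t ω‖})
    (hsuper : ∀ n : ℕ, ‖x‖ < n →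
      Supermartingale
        (fun (t : ℝ≥0) (ω : Ω) =>
          Real.exp (-M * ((((t : ℝ≥0∞) ⊓ τ n ω).toNNReal : ℝ))) *
            (Real.log (1 + ‖X (((t : ℝ≥0∞) ⊓ τ n ω).toNNReal) ω‖ ^ 2) + 1))
        ℱ P) :
    (∀ (t : ℝ≥0) (n : ℕ), ‖x‖ < n →
      P {ω | τ n ω ≤ (t : ℝ≥0∞)} ≤
        ENNReal.ofReal
          (Real.exp (M * t) * (Real.log (1 + ‖x‖ ^ 2) + 1) /
            (Real.log (1 + (n : ℝ) ^ 2) + 1))) ∧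
    P {ω | (⨆ n : ℕ, τ n ω) = ∞} = 1 :=
  stmt_7_general d P ℱ x M hM X hcont hX0 τ hτ hsuper
end
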